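/- Let m ≥ 1, g ≥ 2, γ ∈ ZMod m, and let W = W(m, g, γ) be the twist group defined in the context, acting on V = Fin g → ZMod m × ZMod m. Assume that m is odd, or that 2 ∣ m and the image of γ under the natural ring homomorphism ZMod m → ZMod 2 is 0. Then for every x ∈ V there exists σ ∈ W such that (σ x) 0 = (0, 1) and (σ x) i = (1, 1) for all i ≠ 0. (This is the second part of Lemma 5.4: if m is odd or some contour around a hole or puncture carries an even value, the standard basis can be chosen with values (0, 1, 1, …, 1) on the handle generators.) -/

import Mathlib

/-- Shear of the `β`-components of `x : Fin g → ZMod m × ZMod m` by an amount depending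
only on the `α`-components. -/
def shearB (m g : ℕ) (h : (Fin g → ZMod m) → Fin g → ZMod m) :
    Equiv.Perm (Fin g → ZMod m × ZMod m) where
  toFun x k := ((x k).1, (x k).2 + h (fun l => (x l).1) k)
  invFun x k := ((x k).1, (x k).2 - h (fun l => (x l).1) k)
  left_inv x := by funext k; simp
  right_inv x := by funext k; simp

/-- Shear of the `α`-components of `x : Fin g → ZMod m × ZMod m` by an amount depending
only on the `β`-components. -/
def shearA (m g : ℕ) (h : (Fin g → ZMod m) → Fin g → ZMod m) :
    Equiv.Perm (Fin g → ZMod m × ZMod m) where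
  toFun x k := ((x k).1 + h (fun l => (x l).2) k, (x k).2)
  invFun x k := ((x k).1 - h (fun l => (x l).2) k, (x k).2)
  left_inv x := by funext k; simp
  right_inv x := by funext k; simp

/-- Apply the permutation `e` of `ZMod m × ZMod m` at the single coordinate `i`. -/
def atC (m g : ℕ) (i : Fin g) (e : Equiv.Perm (ZMod m × ZMod m)) :
    Equiv.Perm (Fin g → ZMod m × ZMod m) :=
  Equiv.piCongrRight fun k => if k = i then e else Equiv.refl _

/-- `(α, β) ↦ (−α, −β)`. -/
def negPair (m : ℕ) : Equiv.Perm (ZMod m × ZMod m) where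
  toFun p := (-p.1, -p.2)
  invFun p := (-p.1, -p.2)
  left_inv := by rintro ⟨a, b⟩; simp
  right_inv := by rintro ⟨a, b⟩; simp

/-- `(α, β) ↦ (−β, α)`. -/
def rotPair (m : ℕ) : Equiv.Perm (ZMod m × ZMod m) where
  toFun p := (-p.2, p.1)
  invFun p := (p.2, -p.1)
  left_inv := by rintro ⟨a, b⟩; simp
  right_inv := by rintro ⟨a, b⟩; simp

/-- `(α, β) ↦ (−β, α − γ − 1)`. -/
def t3Pair (m : ℕ) (γ : ZMod m) : Equiv.Perm (ZMod m × ZMod m) where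
  toFun p := (-p.2, p.1 - γ - 1)
  invFun p := (p.2 + γ + 1, -p.1)
  left_inv := by rintro ⟨a, b⟩; simp [Prod.ext_iff]; ring
  right_inv := by rintro ⟨a, b⟩; simp [Prod.ext_iff]; ring

/-- Dehn twist action `T1a(i) : (αᵢ, βᵢ) ↦ (αᵢ+βᵢ, βᵢ)`. -/
def T1a (m g : ℕ) (i : Fin g) : Equiv.Perm (Fin g → ZMod m × ZMod m) :=
  shearA m g fun b k => if k = i then b i else 0

/-- Dehn twist action `T1b(i) : (αᵢ, βᵢ) ↦ (αᵢ, βᵢ+αᵢ)`. -/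
def T1b (m g : ℕ) (i : Fin g) : Equiv.Perm (Fin g → ZMod m × ZMod m) :=
  shearB m g fun a k => if k = i then a i else 0

/-- Dehn twist action `T2(i,j) : βᵢ ↦ βᵢ − αⱼ − 1, βⱼ ↦ βⱼ − αᵢ − 1`. -/
def T2 (m g : ℕ) (i j : Fin g) : Equiv.Perm (Fin g → ZMod m × ZMod m) :=
  shearB m g fun a k => if k = i then -a j - 1 else if k = j then -a i - 1 else 0

/-- Dehn twist action `T3` at the index `i`: `(αᵢ, βᵢ) ↦ (−βᵢ, αᵢ − γ − 1)`. -/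
def T3 (m g : ℕ) (i : Fin g) (γ : ZMod m) : Equiv.Perm (Fin g → ZMod m × ZMod m) :=
  atC m g i (t3Pair m γ)

/-- Dehn twist action `T4(i,j)`: interchange the pairs at positions `i` and `j`. -/
def T4 (m g : ℕ) (i j : Fin g) : Equiv.Perm (Fin g → ZMod m × ZMod m) :=
  Equiv.arrowCongr (Equiv.swap i j) (Equiv.refl _)

/-- Dehn twist action `T5a(i) : (αᵢ, βᵢ) ↦ (−αᵢ, −βᵢ)`. -/
def T5a (m g : ℕ) (i : Fin g) : Equiv.Perm (Fin g → ZMod m × ZMod m) :=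
  atC m g i (negPair m)

/-- Dehn twist action `T5b(i) : (αᵢ, βᵢ) ↦ (−βᵢ, αᵢ)`. -/
def T5b (m g : ℕ) (i : Fin g) : Equiv.Perm (Fin g → ZMod m × ZMod m) :=
  atC m g i (rotPair m)

/-- The generators of the twist group: `T1a(i)`, `T1b(i)`, `T2(i,j)` for `i ≠ j`, `T3` at
the last index, `T4(i,j)` for `i ≠ j`, `T5a(i)`, `T5b(i)`. -/
def twistGens (m g : ℕ) (hg : 0 < g) (γ : ZMod m) :
    Set (Equiv.Perm (Fin g → ZMod m × ZMod m)) :=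
  (Set.range fun i => T1a m g i) ∪ (Set.range fun i => T1b m g i) ∪
    {σ | ∃ i j : Fin g, i ≠ j ∧ σ = T2 m g i j} ∪
    {T3 m g ⟨g - 1, Nat.sub_lt hg Nat.one_pos⟩ γ} ∪
    {σ | ∃ i j : Fin g, i ≠ j ∧ σ = T4 m g i j} ∪
    (Set.range fun i => T5a m g i) ∪ (Set.range fun i => T5b m g i)

/-- The twist group `W(m, g, γ)`: the subgroup of `Equiv.Perm (Fin g → ZMod m × ZMod m)`
generated by the Dehn twist actions. -/
def twistGroup (m g : ℕ) (hg : 0 < g) (γ : ZMod m) :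
    Subgroup (Equiv.Perm (Fin g → ZMod m × ZMod m)) :=
  Subgroup.closure (twistGens m g hg γ)

/-!
Every move used stays inside one orbit of `twistGroup`. The twists `T1b(i)`, `T5a(i)`, `T5b(i)`
act on the pair `(αᵢ, βᵢ)` like elementary matrices of `SL₂(ℤ)`, so the Euclidean algorithm
makes `α₀ = 0`. Once `α₀ = 0`, the twist `T2(i, 0)` shifts `βᵢ` by an arbitrary amount and
`T1a(i)` then sets `αᵢ = 1`, which puts `(1, 1)` at every `i ≠ 0` at the expense of `β₀`.
Finally, with `(α₀, β₀) = (0, b)`, the twists `T2(0, j)` and `T1b(j)` turn `b` into `b - 2z` for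
any `z`, and a detour through `T3` at the last index turns `b` into `b + γ + 1`. If `m` is odd
every element of `ZMod m` is even; if `m` and `γ` are even, one of `b - 1` and `b + γ` is even.
Either way `b` can be brought to `1`.
-/

open MulAction Function

theorem MulAction.mem_orbit_trans {G α : Type*} [Group G] [MulAction G α] {a b c : α}
    (hab : b ∈ orbit G a) (hbc : c ∈ orbit G b) : c ∈ orbit G a :=
  orbit_eq_iff.mpr hab ▸ hbc

theorem Equiv.Perm.apply_mem_orbit {α : Type*} {H : Subgroup (Equiv.Perm α)} {σ : Equiv.Perm α}
    (hσ : σ ∈ H) (x : α) : σ x ∈ orbit H x :=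
  mem_orbit x (⟨σ, hσ⟩ : H)

theorem ZMod.even_of_odd_modulus {m : ℕ} (hm : Odd m) (c : ZMod m) : Even c := by
  obtain ⟨k, rfl⟩ := hm
  have h : ((2 * k + 1 : ℕ) : ZMod (2 * k + 1)) = 0 := ZMod.natCast_self _
  push_cast at h
  exact ⟨(k + 1) * c, by linear_combination (-c) * h⟩

theorem ZMod.even_of_castHom_eq_zero {m : ℕ} [NeZero m] (h2 : 2 ∣ m) {c : ZMod m}
    (hc : ZMod.castHom h2 (ZMod 2) c = 0) : Even c := by
  rw [← ZMod.natCast_zmod_val c, map_natCast, ZMod.natCast_eq_zero_iff_even] at hc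
  rw [← ZMod.natCast_zmod_val c]
  exact hc.natCast

theorem even_sub_one_or_even_add {m : ℕ} [NeZero m] {γ : ZMod m}
    (hcase : Odd m ∨ ∃ h2 : (2 : ℕ) ∣ m, ZMod.castHom h2 (ZMod 2) γ = 0) (b : ZMod m) :
    Even (b - 1) ∨ Even (b + γ) := by
  rcases hcase with hm | ⟨h2, hγ⟩
  · exact .inl (ZMod.even_of_odd_modulus hm _)
  have hsum : ZMod.castHom h2 (ZMod 2) (b + γ) = ZMod.castHom h2 (ZMod 2) (b - 1) + 1 := by
    rw [map_add, hγ, map_sub, map_one]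
    ring
  rcases (by decide : ∀ u : ZMod 2, u = 0 ∨ u + 1 = 0) (ZMod.castHom h2 (ZMod 2) (b - 1))
    with h | h
  · exact .inl (ZMod.even_of_castHom_eq_zero h2 h)
  · exact .inr (ZMod.even_of_castHom_eq_zero h2 (hsum.trans h))

section Moves

variable {m g : ℕ} {i j : Fin g} {x : Fin g → ZMod m × ZMod m} {a b c d : ZMod m}

theorem atC_apply_eq_update (i : Fin g) (e : Equiv.Perm (ZMod m × ZMod m))
    (x : Fin g → ZMod m × ZMod m) : atC m g i e x = update x i (e (x i)) := by
  funext k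
  rcases eq_or_ne k i with rfl | hk <;> simp [atC, *]

theorem shearA_pow_apply (h : (Fin g → ZMod m) → Fin g → ZMod m) (n : ℕ)
    (x : Fin g → ZMod m × ZMod m) :
    (shearA m g h ^ n) x =
      fun k => ((x k).1 + (n : ZMod m) * h (fun l => (x l).2) k, (x k).2) := by
  induction n with
  | zero => simp
  | succ n ih =>
    rw [pow_succ', Equiv.Perm.mul_apply, ih]
    funext k
    simp [shearA, add_mul, add_assoc]

theorem shearB_pow_apply (h : (Fin g → ZMod m) → Fin g → ZMod m) (n : ℕ)
    (x : Fin g → ZMod m × ZMod m) :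
    (shearB m g h ^ n) x =
      fun k => ((x k).1, (x k).2 + (n : ZMod m) * h (fun l => (x l).1) k) := by
  induction n with
  | zero => simp
  | succ n ih =>
    rw [pow_succ', Equiv.Perm.mul_apply, ih]
    funext k
    simp [shearB, add_mul, add_assoc]

theorem T1a_pow_apply (n : ℕ) (hx : x i = (a, b)) :
    (T1a m g i ^ n) x = update x i (a + n * b, b) := by
  rw [T1a, shearA_pow_apply]
  funext k
  rcases eq_or_ne k i with rfl | hk <;> simp [*]

theorem T1b_pow_apply (n : ℕ) (hx : x i = (a, b)) :
    (T1b m g i ^ n) x = update x i (a, b + n * a) := by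
  rw [T1b, shearB_pow_apply]
  funext k
  rcases eq_or_ne k i with rfl | hk <;> simp [*]

theorem T2_pow_apply (hij : i ≠ j) (n : ℕ) (hxi : x i = (a, b)) (hxj : x j = (c, d)) :
    (T2 m g i j ^ n) x =
      update (update x i (a, b + n * (-c - 1))) j (c, d + n * (-a - 1)) := by
  rw [T2, shearB_pow_apply]
  funext k
  rcases eq_or_ne k j with rfl | hkj
  · simp [*, hij.symm]
  rcases eq_or_ne k i with rfl | hki <;> simp [*]

variable {H : Subgroup (Equiv.Perm (Fin g → ZMod m × ZMod m))}

theorem update_mem_orbit_of_T1a_mem [NeZero m] (hH : T1a m g i ∈ H) (hx : x i = (a, b))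
    (z : ZMod m) : update x i (a + z * b, b) ∈ orbit H x := by
  simpa [T1a_pow_apply _ hx] using Equiv.Perm.apply_mem_orbit (pow_mem hH z.val) x

theorem update_mem_orbit_of_T1b_mem [NeZero m] (hH : T1b m g i ∈ H) (hx : x i = (a, b))
    (z : ZMod m) : update x i (a, b + z * a) ∈ orbit H x := by
  simpa [T1b_pow_apply _ hx] using Equiv.Perm.apply_mem_orbit (pow_mem hH z.val) x

theorem update_update_mem_orbit_of_T2_mem [NeZero m] (hH : T2 m g i j ∈ H) (hij : i ≠ j)
    (hxi : x i = (a, b)) (hxj : x j = (c, d)) (z : ZMod m) :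
    update (update x i (a, b + z * (-c - 1))) j (c, d + z * (-a - 1)) ∈ orbit H x := by
  simpa [T2_pow_apply hij _ hxi hxj] using Equiv.Perm.apply_mem_orbit (pow_mem hH z.val) x

theorem update_mem_orbit_of_T3_mem {γ : ZMod m} (hH : T3 m g i γ ∈ H) (hx : x i = (a, b)) :
    update x i (-b, a - γ - 1) ∈ orbit H x := by
  simpa [T3, atC_apply_eq_update, hx, t3Pair] using Equiv.Perm.apply_mem_orbit hH x

theorem update_mem_orbit_of_T5a_mem (hH : T5a m g i ∈ H) (hx : x i = (a, b)) :
    update x i (-a, -b) ∈ orbit H x := by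
  simpa [T5a, atC_apply_eq_update, hx, negPair] using Equiv.Perm.apply_mem_orbit hH x

theorem update_mem_orbit_of_T5b_mem (hH : T5b m g i ∈ H) (hx : x i = (a, b)) :
    update x i (-b, a) ∈ orbit H x := by
  simpa [T5b, atC_apply_eq_update, hx, rotPair] using Equiv.Perm.apply_mem_orbit hH x

end Moves

section Euclid

variable {m g : ℕ} [NeZero m] {i : Fin g} {H : Subgroup (Equiv.Perm (Fin g → ZMod m × ZMod m))}

theorem exists_mem_orbit_fst_val_lt (h1b : T1b m g i ∈ H) (h5a : T5a m g i ∈ H)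
    (h5b : T5b m g i ∈ H) {x : Fin g → ZMod m × ZMod m} {a b : ZMod m} (hx : x i = (a, b))
    (ha : a ≠ 0) : ∃ y ∈ orbit H x, (y i).1.val < a.val := by
  have hra := Nat.mod_lt b.val (ZMod.val_pos.mpr ha)
  have hdiv := Nat.mod_add_div b.val a.val
  generalize b.val % a.val = r at hra hdiv
  generalize b.val / a.val = q at hdiv
  have hr : b + -(q : ZMod m) * a = r := by
    have := congrArg (Nat.cast : ℕ → ZMod m) hdiv
    push_cast [ZMod.natCast_zmod_val] at this
    linear_combination -this
  -- `(a, b) ↦ (a, r) ↦ (-r, a) ↦ (r, -a)`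
  have h₁ := update_mem_orbit_of_T1b_mem h1b hx (-q)
  rw [hr] at h₁
  have h₂ := update_mem_orbit_of_T5b_mem h5b (update_self i (a, (r : ZMod m)) x)
  rw [update_idem] at h₂
  have h₃ := update_mem_orbit_of_T5a_mem h5a (update_self i (-(r : ZMod m), a) x)
  refine ⟨update x i (r, -a), ?_, ?_⟩
  · simpa using mem_orbit_trans h₁ (mem_orbit_trans h₂ h₃)
  · rwa [update_self, ZMod.val_cast_of_lt (hra.trans (ZMod.val_lt a))]

theorem exists_mem_orbit_fst_eq_zero (h1b : T1b m g i ∈ H) (h5a : T5a m g i ∈ H)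
    (h5b : T5b m g i ∈ H) (x : Fin g → ZMod m × ZMod m) :
    ∃ y ∈ orbit H x, (y i).1 = 0 := by
  induction hn : (x i).1.val using Nat.strong_induction_on generalizing x with
  | _ n ih =>
  by_cases ha : (x i).1 = 0
  · exact ⟨x, mem_orbit_self x, ha⟩
  obtain ⟨y, hxy, hlt⟩ := exists_mem_orbit_fst_val_lt h1b h5a h5b Prod.mk.eta.symm ha
  obtain ⟨z, hyz, hz⟩ := ih _ (hn ▸ hlt) y rfl
  exact ⟨z, mem_orbit_trans hxy hyz, hz⟩

end Euclid

section TwistGroup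

variable {m g : ℕ} {hg : 0 < g} {γ : ZMod m}

theorem T1a_mem_twistGroup (i : Fin g) : T1a m g i ∈ twistGroup m g hg γ :=
  Subgroup.subset_closure (by simp [twistGens])

theorem T1b_mem_twistGroup (i : Fin g) : T1b m g i ∈ twistGroup m g hg γ :=
  Subgroup.subset_closure (by simp [twistGens])

theorem T2_mem_twistGroup {i j : Fin g} (hij : i ≠ j) : T2 m g i j ∈ twistGroup m g hg γ :=
  Subgroup.subset_closure (.inl <| .inl <| .inl <| .inl <| .inr ⟨i, j, hij, rfl⟩)

theorem T3_mem_twistGroup :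
    T3 m g ⟨g - 1, Nat.sub_lt hg Nat.one_pos⟩ γ ∈ twistGroup m g hg γ :=
  Subgroup.subset_closure (by simp [twistGens])

theorem T5a_mem_twistGroup (i : Fin g) : T5a m g i ∈ twistGroup m g hg γ :=
  Subgroup.subset_closure (by simp [twistGens])

theorem T5b_mem_twistGroup (i : Fin g) : T5b m g i ∈ twistGroup m g hg γ :=
  Subgroup.subset_closure (by simp [twistGens])

end TwistGroup

section Normalization

variable {m g : ℕ} [NeZero m] {hg : 0 < g} {γ : ZMod m} {i₀ : Fin g}
  {x : Fin g → ZMod m × ZMod m} {b : ZMod m}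

theorem exists_mem_orbit_eq_one_one {i : Fin g} (hi : i ≠ i₀) (hx : (x i₀).1 = 0) :
    ∃ y ∈ orbit (twistGroup m g hg γ) x,
      y i = (1, 1) ∧ (y i₀).1 = 0 ∧ ∀ k ≠ i, k ≠ i₀ → y k = x k := by
  have hx₀ : x i₀ = (0, (x i₀).2) := by rw [← hx]
  obtain ⟨y, hxy, hyi, hy₀, hyx⟩ : ∃ y ∈ orbit (twistGroup m g hg γ) x,
      y i = ((x i).1, 1) ∧ (y i₀).1 = 0 ∧ ∀ k ≠ i, k ≠ i₀ → y k = x k :=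
    ⟨_, update_update_mem_orbit_of_T2_mem (T2_mem_twistGroup hi) hi Prod.mk.eta.symm hx₀
      ((x i).2 - 1), by simp [hi], by simp, fun k hk hk₀ => by simp [hk, hk₀]⟩
  refine ⟨_, mem_orbit_trans hxy
    (update_mem_orbit_of_T1a_mem (T1a_mem_twistGroup i) hyi (1 - (x i).1)), by simp,
    by simp [hi.symm, hy₀], fun k hk hk₀ => by simp [hk, hyx k hk hk₀]⟩

theorem exists_mem_orbit_forall_ne_eq_one_one (hx : (x i₀).1 = 0) :
    ∃ y ∈ orbit (twistGroup m g hg γ) x, (y i₀).1 = 0 ∧ ∀ i ≠ i₀, y i = (1, 1) := by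
  suffices ∀ s : Finset (Fin g), ∃ y ∈ orbit (twistGroup m g hg γ) x,
      (y i₀).1 = 0 ∧ ∀ i ∈ s, i ≠ i₀ → y i = (1, 1) by
    simpa using this Finset.univ
  intro s
  induction s using Finset.induction_on with
  | empty => exact ⟨x, mem_orbit_self x, hx, by simp⟩
  | insert i s _ ih =>
    obtain ⟨y, hxy, hy₀, hy⟩ := ih
    by_cases hi : i = i₀
    · exact ⟨y, hxy, hy₀, by simpa [hi] using hy⟩
    obtain ⟨z, hyz, hzi, hz₀, hzy⟩ := exists_mem_orbit_eq_one_one (γ := γ) hi hy₀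
    refine ⟨z, mem_orbit_trans hxy hyz, hz₀, fun k hk hk₀ => ?_⟩
    rcases Finset.mem_insert.mp hk with rfl | hks
    · exact hzi
    by_cases hki : k = i
    · exact hki ▸ hzi
    rw [hzy k hki hk₀, hy k hks hk₀]

theorem update_sub_two_mul_mem_orbit {j : Fin g} (hj : i₀ ≠ j) (hx₀ : x i₀ = (0, b))
    (hxj : x j = (1, 1)) (z : ZMod m) :
    update x i₀ (0, b - 2 * z) ∈ orbit (twistGroup m g hg γ) x := by
  have h₁ := update_update_mem_orbit_of_T2_mem (T2_mem_twistGroup (hg := hg) (γ := γ) hj) hj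
    hx₀ hxj z
  have h₂ := update_mem_orbit_of_T1b_mem (T1b_mem_twistGroup (hg := hg) (γ := γ) j)
    (update_self j (1, 1 + z * (-0 - 1)) (update x i₀ (0, b + z * (-1 - 1)))) z
  convert mem_orbit_trans h₁ h₂ using 1
  funext k
  by_cases hkj : k = j
  · subst hkj; simp [hj.symm, hxj]
  by_cases hk₀ : k = i₀
  · subst hk₀; simp [hkj]; ring
  simp [hkj, hk₀]

theorem update_add_add_one_mem_orbit {L : Fin g} (hL : T3 m g L γ ∈ twistGroup m g hg γ)
    (hL₀ : i₀ ≠ L) (hx₀ : x i₀ = (0, b)) (hxL : x L = (1, 1)) :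
    update x i₀ (0, b + γ + 1) ∈ orbit (twistGroup m g hg γ) x := by
  -- at `L`: `(1, 1) ↦ (1, 0) ↦ (0, -γ) ↦ (0, 1) ↦ (1, 1)`; the third move also shifts `b`
  have h₁ : update x L (1, 0) ∈ orbit (twistGroup m g hg γ) x := by
    simpa using update_mem_orbit_of_T1b_mem (T1b_mem_twistGroup L) hxL (-1)
  have h₂ : update x L (0, -γ) ∈ orbit (twistGroup m g hg γ) (update x L (1, 0)) := by
    simpa using update_mem_orbit_of_T3_mem hL (update_self L (1, 0) x)
  have h₃ : update (update x i₀ (0, b + γ + 1)) L (0, 1) ∈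
      orbit (twistGroup m g hg γ) (update x L (0, -γ)) := by
    convert update_update_mem_orbit_of_T2_mem (T2_mem_twistGroup hL₀) hL₀
      (show update x L (0, -γ) i₀ = (0, b) by simp [hL₀, hx₀]) (update_self L (0, -γ) x)
      (-γ - 1) using 1
    rw [update_comm hL₀.symm, update_idem]
    congr 3 <;> ring
  have h₄ := update_mem_orbit_of_T1a_mem (T1a_mem_twistGroup (hg := hg) (γ := γ) L)
    (update_self L (0, 1) (update x i₀ (0, b + γ + 1))) 1
  have hback : update (update x i₀ (0, b + γ + 1)) L (1, 1) = update x i₀ (0, b + γ + 1) :=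
    update_eq_self_iff.mpr (by simp [hL₀.symm, hxL])
  rw [update_idem, zero_add, one_mul, hback] at h₄
  exact mem_orbit_trans h₁ (mem_orbit_trans h₂ (mem_orbit_trans h₃ h₄))

theorem exists_mem_orbit_eq_zero_one
    (hcase : Odd m ∨ ∃ h2 : (2 : ℕ) ∣ m, ZMod.castHom h2 (ZMod 2) γ = 0) {L : Fin g}
    (hL : T3 m g L γ ∈ twistGroup m g hg γ) (hL₀ : i₀ ≠ L)
    (hx₀ : (x i₀).1 = 0) (hx : ∀ i ≠ i₀, x i = (1, 1)) :
    ∃ y ∈ orbit (twistGroup m g hg γ) x, y i₀ = (0, 1) ∧ ∀ i ≠ i₀, y i = (1, 1) := by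
  have of_even_sub_one : ∀ {y b}, y ∈ orbit (twistGroup m g hg γ) x → y i₀ = (0, b) →
      (∀ i ≠ i₀, y i = (1, 1)) → Even (b - 1) →
      ∃ y ∈ orbit (twistGroup m g hg γ) x, y i₀ = (0, 1) ∧ ∀ i ≠ i₀, y i = (1, 1) := by
    rintro y b hxy hy₀ hy ⟨z, hz⟩
    refine ⟨_, mem_orbit_trans hxy (update_sub_two_mul_mem_orbit hL₀ hy₀ (hy L hL₀.symm) z),
      ?_, fun i hi => by simp [hi, hy i hi]⟩
    simp only [update_self, Prod.mk.injEq, true_and]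
    linear_combination hz
  have hx₀' : x i₀ = (0, (x i₀).2) := by rw [← hx₀]
  rcases even_sub_one_or_even_add hcase (x i₀).2 with h | h
  · exact of_even_sub_one (mem_orbit_self x) hx₀' hx h
  · exact of_even_sub_one (update_add_add_one_mem_orbit hL hL₀ hx₀' (hx L hL₀.symm))
      (update_self _ _ _)
      (fun i hi => by simp [hi, hx i hi]) (by simpa using h)

end Normalization

/-- Lemma 5.4, second part: if `m` is odd, or `m` is even and the value `γ` on a contour
around a hole or puncture is even, then the tuple of values of an `m`-Arf function on the
handle generators can be transformed by the twist group into `(0, 1, 1, …, 1)`. -/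
theorem twist_normalization_odd_or_even_value (m g : ℕ) (hm : 1 ≤ m) (hg : 2 ≤ g)
    (γ : ZMod m)
    (hcase : Odd m ∨ ∃ h2 : (2 : ℕ) ∣ m, ZMod.castHom h2 (ZMod 2) γ = 0)
    (x : Fin g → ZMod m × ZMod m) :
    ∃ σ ∈ twistGroup m g (by omega) γ,
      (σ x) ⟨0, by omega⟩ = (0, 1) ∧
      ∀ i : Fin g, i ≠ ⟨0, by omega⟩ → (σ x) i = (1, 1) := by
  have : NeZero m := ⟨by omega⟩
  have hL₀ : (⟨0, by omega⟩ : Fin g) ≠ ⟨g - 1, by omega⟩ := by simp [Fin.ext_iff]; omega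
  obtain ⟨y₁, hxy₁, hy₁⟩ := exists_mem_orbit_fst_eq_zero (T1b_mem_twistGroup _)
    (T5a_mem_twistGroup _) (T5b_mem_twistGroup _) x
  obtain ⟨y₂, hy₁y₂, hy₂₀, hy₂⟩ := exists_mem_orbit_forall_ne_eq_one_one hy₁
  obtain ⟨y₃, hy₂y₃, hy₃₀, hy₃⟩ :=
    exists_mem_orbit_eq_zero_one hcase T3_mem_twistGroup hL₀ hy₂₀ hy₂
  obtain ⟨⟨σ, hσ⟩, rfl⟩ := mem_orbit_trans hxy₁ (mem_orbit_trans hy₁y₂ hy₂y₃)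
  exact ⟨σ, hσ, hy₃₀, hy₃⟩
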